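/- Let A, C, D ∈ ℝ^{n×n} be simultaneously diagonalizable by a single invertible matrix V: A = VαV^{-1}, C = VγV^{-1}, D = VδV^{-1} with α, γ, δ diagonal. Then λ is an eigenvalue of the block matrix [[A, I],[C, D]] ∈ ℝ^{2n×2n} if and only if λ is an eigenvalue of one of the 2×2 matrices [[α_k, 1],[γ_k, δ_k]] for some k ∈ {1,…,n}. -/
import Mathlib

open Matrix

/-- Spectrum membership via eigenvectors, over a field. -/
lemma mem_spectrum_iff_exists_eigvec {m : Type*} [Fintype m] [DecidableEq m]
    (M : Matrix m m ℝ) (lam : ℝ) :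
    lam ∈ spectrum ℝ M ↔ ∃ v ≠ 0, M *ᵥ v = lam • v := by
  rw [spectrum.mem_iff, Matrix.isUnit_iff_isUnit_det, isUnit_iff_ne_zero, not_not,
    ← Matrix.exists_mulVec_eq_zero_iff]
  refine exists_congr fun v => and_congr_right fun _ => ?_
  rw [Matrix.sub_mulVec, sub_eq_zero, Algebra.algebraMap_eq_smul_one _, Matrix.smul_mulVec,
    Matrix.one_mulVec, eq_comm]

lemma diag_mulVec {n : ℕ} {α : Matrix (Fin n) (Fin n) ℝ} (hα : α.IsDiag)
    (x : Fin n → ℝ) (i : Fin n) : (α *ᵥ x) i = α i i * x i := by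
  rw [Matrix.mulVec, dotProduct]
  rw [Finset.sum_eq_single i]
  · intro j _ hj
    rw [hα (Ne.symm hj), zero_mul]
  · simp

lemma block_mulVec_inl {n : ℕ} {α γ δ : Matrix (Fin n) (Fin n) ℝ} (hα : α.IsDiag)
    (v : Fin n ⊕ Fin n → ℝ) (j : Fin n) :
    ((fromBlocks α 1 γ δ) *ᵥ v) (Sum.inl j) = α j j * v (Sum.inl j) + v (Sum.inr j) := by
  conv_lhs => rw [← Sum.elim_comp_inl_inr v, fromBlocks_mulVec]
  simp [diag_mulVec hα, Matrix.one_mulVec]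

lemma block_mulVec_inr {n : ℕ} {α γ δ : Matrix (Fin n) (Fin n) ℝ} (hγ : γ.IsDiag)
    (hδ : δ.IsDiag) (v : Fin n ⊕ Fin n → ℝ) (j : Fin n) :
    ((fromBlocks α 1 γ δ) *ᵥ v) (Sum.inr j)
      = γ j j * v (Sum.inl j) + δ j j * v (Sum.inr j) := by
  conv_lhs => rw [← Sum.elim_comp_inl_inr v, fromBlocks_mulVec]
  simp [diag_mulVec hγ, diag_mulVec hδ]

/-- If `A, C, D` are simultaneously diagonalizable by a single invertible matrix
`V` (`A = VαV⁻¹`, `C = VγV⁻¹`, `D = VδV⁻¹` with `α, γ, δ` diagonal), then `λ` is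
an eigenvalue of the block matrix `[[A, I],[C, D]]` if and only if `λ` is an
eigenvalue of one of the `2×2` matrices `[[α_k, 1],[γ_k, δ_k]]`. -/
theorem blockJacobian_spectrum_invertible
    (n : ℕ) (A C D V α γ δ : Matrix (Fin n) (Fin n) ℝ)
    (hV : IsUnit V)
    (hα : α.IsDiag) (hγ : γ.IsDiag) (hδ : δ.IsDiag)
    (hA : A = V * α * V⁻¹) (hC : C = V * γ * V⁻¹) (hD : D = V * δ * V⁻¹) :
    ∀ lam : ℝ, lam ∈ spectrum ℝ (Matrix.fromBlocks A 1 C D)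
      ↔ ∃ k : Fin n, lam ∈ spectrum ℝ !![α k k, 1; γ k k, δ k k] := by
  intro lam
  have hVd : IsUnit V.det := (Matrix.isUnit_iff_isUnit_det V).mp hV
  have hVV : V * V⁻¹ = 1 := Matrix.mul_nonsing_inv V hVd
  have hVV' : V⁻¹ * V = 1 := Matrix.nonsing_inv_mul V hVd
  set W : Matrix (Fin n ⊕ Fin n) (Fin n ⊕ Fin n) ℝ := fromBlocks V 0 0 V with hW
  set W' : Matrix (Fin n ⊕ Fin n) (Fin n ⊕ Fin n) ℝ := fromBlocks V⁻¹ 0 0 V⁻¹ with hW'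
  have h1 : W * W' = 1 := by
    rw [hW, hW', fromBlocks_multiply]
    simp [hVV, fromBlocks_one]
  have h2 : W' * W = 1 := by
    rw [hW, hW', fromBlocks_multiply]
    simp [hVV', fromBlocks_one]
  let u : (Matrix (Fin n ⊕ Fin n) (Fin n ⊕ Fin n) ℝ)ˣ := ⟨W, W', h1, h2⟩
  have hkey : fromBlocks A 1 C D = (u : Matrix (Fin n ⊕ Fin n) (Fin n ⊕ Fin n) ℝ) * fromBlocks α 1 γ δ * ((u⁻¹ : (Matrix (Fin n ⊕ Fin n) (Fin n ⊕ Fin n) ℝ)ˣ) : Matrix (Fin n ⊕ Fin n) (Fin n ⊕ Fin n) ℝ) := by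
    show fromBlocks A 1 C D = W * fromBlocks α 1 γ δ * W'
    rw [hW, hW', fromBlocks_multiply, fromBlocks_multiply]
    simp [hA, hC, hD, hVV]
  rw [hkey, spectrum.units_conjugate, mem_spectrum_iff_exists_eigvec]
  constructor
  · rintro ⟨v, hv, hMv⟩
    have e1 : ∀ j, α j j * v (Sum.inl j) + v (Sum.inr j) = lam * v (Sum.inl j) := by
      intro j
      have := congrFun hMv (Sum.inl j)
      rwa [block_mulVec_inl hα] at this
    have e2 : ∀ j, γ j j * v (Sum.inl j) + δ j j * v (Sum.inr j) = lam * v (Sum.inr j) := by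
      intro j
      have := congrFun hMv (Sum.inr j)
      rwa [block_mulVec_inr hγ hδ] at this
    obtain ⟨i, hi⟩ := Function.ne_iff.mp hv
    obtain (⟨k, rfl⟩ | ⟨k, rfl⟩) : (∃ k, i = Sum.inl k) ∨ (∃ k, i = Sum.inr k) := by
      cases i with
      | inl k => exact Or.inl ⟨k, rfl⟩
      | inr k => exact Or.inr ⟨k, rfl⟩
    all_goals {
      refine ⟨k, (mem_spectrum_iff_exists_eigvec _ _).mpr
        ⟨![v (Sum.inl k), v (Sum.inr k)], ?_, ?_⟩⟩
      · intro h0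
        apply hi
        first
        | simpa using congrFun h0 0
        | simpa using congrFun h0 1
      · ext i
        fin_cases i <;>
          simp [Matrix.mulVec, dotProduct, Fin.sum_univ_two] <;>
          [linarith [e1 k]; linarith [e2 k]]
    }
  · rintro ⟨k, hk⟩
    obtain ⟨w, hw, hNw⟩ := (mem_spectrum_iff_exists_eigvec _ _).mp hk
    have f1 : α k k * w 0 + w 1 = lam * w 0 := by
      have := congrFun hNw 0
      simpa [Matrix.mulVec, dotProduct, Fin.sum_univ_two] using this
    have f2 : γ k k * w 0 + δ k k * w 1 = lam * w 1 := by
      have := congrFun hNw 1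
      simpa [Matrix.mulVec, dotProduct, Fin.sum_univ_two] using this
    refine ⟨Sum.elim (fun j => if j = k then w 0 else 0) (fun j => if j = k then w 1 else 0),
      ?_, ?_⟩
    · intro h0
      apply hw
      have h0' := congrFun h0
      ext i
      fin_cases i
      · simpa using h0' (Sum.inl k)
      · simpa using h0' (Sum.inr k)
    · ext i
      cases i with
      | inl j =>
        rw [block_mulVec_inl hα]
        by_cases hj : j = k
        · subst hj; simpa using f1
        · simp [hj]
      | inr j =>
        rw [block_mulVec_inr hγ hδ]
        by_cases hj : j = k
        · subst hj; simpa using f2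
        · simp [hj]
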